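/- arXiv:2212.01301 — 2 statements merged into one kernel-verified Lean document; each statement's English description precedes it below -/
import Mathlib

section
/- If L ⊆ Σ* is a semilinear language over a finite alphabet Σ, then the Kleene star L* is a semilinear language. -/
/-- A set `Q ⊆ ℕ^α` is linear if it has a constant vector `v₀` and finitely many
period vectors `v₁, …, v_l` with `Q = {v₀ + i₁v₁ + ⋯ + i_l v_l}`. -/
def IsLinearSetNat {α : Type*} (Q : Set (α → ℕ)) : Prop :=
  ∃ (v₀ : α → ℕ) (l : ℕ) (v : Fin l → α → ℕ),
    Q = { x | ∃ c : Fin l → ℕ, x = v₀ + ∑ j, c j • v j }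

/-- A set is semilinear if it is a finite union of linear sets. -/
def IsSemilinearSetNat {α : Type*} (Q : Set (α → ℕ)) : Prop :=
  ∃ (n : ℕ) (Qs : Fin n → Set (α → ℕ)),
    (∀ i, IsLinearSetNat (Qs i)) ∧ Q = ⋃ i, Qs i

open Classical in
/-- The Parikh image of a word: `parikhWord w a = |w|_a`. -/
noncomputable def parikhWord {σ : Type*} (w : List σ) : σ → ℕ :=
  fun a => w.count a

/-- A language is semilinear if its Parikh image is a semilinear set. -/
def IsSemilinearLanguage {σ : Type*} (L : Set (List σ)) : Prop :=
  IsSemilinearSetNat (parikhWord '' L)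

/-!
The Parikh image of `L∗` is the additive submonoid of `ℕ^Σ` generated by the Parikh image of `L`,
so it suffices to show that the submonoid generated by a semilinear set is semilinear. Writing a
linear set as `v₀ + ⟨P⟩` with `P` finite, the submonoid it generates is `{0} ∪ (v₀ + ⟨P ∪ {v₀}⟩)`,
since a nonempty sum of `k + 1` elements `v₀ + pᵢ` is `v₀ + (k • v₀ + ∑ pᵢ)`. The submonoid
generated by a finite union is the sumset of the submonoids generated by its members, and
semilinear sets are closed under unions and sumsets.
-/

open Pointwise

lemma AddSubmonoid.closure_singleton_add_closure {M : Type*} [AddCommMonoid M] (a : M)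
    (P : Set M) :
    (closure ({a} + (closure P : Set M)) : Set M) =
      {0} ∪ ({a} + (closure (insert a P) : Set M)) := by
  simp only [Set.singleton_add]
  apply Set.Subset.antisymm
  · intro x hx
    induction hx using closure_induction with
    | mem x hx => exact Or.inr (Set.image_mono (closure_mono (Set.subset_insert a P)) hx)
    | zero => exact Or.inl rfl
    | add x y _ _ hx hy =>
      rcases hx with rfl | ⟨x, hx, rfl⟩
      · simpa using hy
      rcases hy with rfl | ⟨y, hy, rfl⟩
      · simpa using Or.inr ⟨x, hx, rfl⟩
      refine Or.inr ⟨a + x + y, add_mem (add_mem (subset_closure (Set.mem_insert a P)) hx) hy, ?_⟩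
      dsimp only
      abel
  · rintro _ (rfl | ⟨y, hy, rfl⟩)
    · exact zero_mem _
    rw [Set.insert_eq, closure_union, SetLike.mem_coe, mem_sup] at hy
    obtain ⟨_, hk, z, hz, rfl⟩ := hy
    obtain ⟨k, rfl⟩ := mem_closure_singleton.1 hk
    have hz' : a + z ∈ closure ((a + ·) '' (closure P : Set M)) := subset_closure ⟨z, hz, rfl⟩
    have ha : a ∈ closure ((a + ·) '' (closure P : Set M)) :=
      subset_closure ⟨0, zero_mem _, add_zero a⟩
    show a + (k • a + z) ∈ closure ((a + ·) '' (closure P : Set M))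
    rw [show a + (k • a + z) = (a + z) + k • a by abel]
    exact add_mem hz' (nsmul_mem ha k)

section SemilinearSets

variable {α : Type*}

lemma singleton_add_closure_range {l : ℕ} (v₀ : α → ℕ) (v : Fin l → α → ℕ) :
    {v₀} + (AddSubmonoid.closure (Set.range v) : Set (α → ℕ)) =
      {x | ∃ c : Fin l → ℕ, x = v₀ + ∑ j, c j • v j} := by
  ext x
  simp only [Set.singleton_add, Set.mem_image, SetLike.mem_coe,
    AddSubmonoid.mem_closure_range_iff_of_fintype, Set.mem_ofPred_eq]
  constructor
  · rintro ⟨_, ⟨c, rfl⟩, rfl⟩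
    exact ⟨c, rfl⟩
  · rintro ⟨c, rfl⟩
    exact ⟨_, ⟨c, rfl⟩, rfl⟩

theorem isLinearSetNat_iff {Q : Set (α → ℕ)} :
    IsLinearSetNat Q ↔ ∃ (v₀ : α → ℕ) (P : Set (α → ℕ)),
      P.Finite ∧ Q = {v₀} + (AddSubmonoid.closure P : Set (α → ℕ)) := by
  constructor
  · rintro ⟨v₀, l, v, rfl⟩
    exact ⟨v₀, Set.range v, Set.finite_range v, (singleton_add_closure_range v₀ v).symm⟩
  · rintro ⟨v₀, P, hP, rfl⟩
    obtain ⟨l, v, rfl⟩ := hP.fin_embedding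
    exact ⟨v₀, l, v, singleton_add_closure_range v₀ v⟩

theorem isSemilinearSetNat_iff {Q : Set (α → ℕ)} :
    IsSemilinearSetNat Q ↔ ∃ S : Set (Set (α → ℕ)),
      S.Finite ∧ (∀ q ∈ S, IsLinearSetNat q) ∧ Q = ⋃₀ S := by
  constructor
  · rintro ⟨n, Qs, hQs, rfl⟩
    exact ⟨Set.range Qs, Set.finite_range Qs, Set.forall_mem_range.2 hQs,
      (Set.sUnion_range Qs).symm⟩
  · rintro ⟨S, hS, hlin, rfl⟩
    obtain ⟨n, Qs, rfl⟩ := hS.fin_embedding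
    exact ⟨n, Qs, fun i => hlin _ (Set.mem_range_self i), Set.sUnion_range Qs⟩

lemma isLinearSetNat_zero : IsLinearSetNat ({0} : Set (α → ℕ)) :=
  isLinearSetNat_iff.2 ⟨0, ∅, Set.finite_empty, by simp⟩

lemma IsLinearSetNat.add {A B : Set (α → ℕ)} (hA : IsLinearSetNat A) (hB : IsLinearSetNat B) :
    IsLinearSetNat (A + B) := by
  obtain ⟨a, P, hP, rfl⟩ := isLinearSetNat_iff.1 hA
  obtain ⟨b, R, hR, rfl⟩ := isLinearSetNat_iff.1 hB
  refine isLinearSetNat_iff.2 ⟨a + b, P ∪ R, hP.union hR, ?_⟩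
  rw [AddSubmonoid.closure_union, AddSubmonoid.coe_sup, ← Set.singleton_add_singleton,
    add_add_add_comm]

lemma IsLinearSetNat.isSemilinearSetNat {Q : Set (α → ℕ)} (hQ : IsLinearSetNat Q) :
    IsSemilinearSetNat Q :=
  isSemilinearSetNat_iff.2
    ⟨{Q}, Set.finite_singleton Q, by simpa using hQ, (Set.sUnion_singleton Q).symm⟩

lemma IsSemilinearSetNat.union {A B : Set (α → ℕ)} (hA : IsSemilinearSetNat A)
    (hB : IsSemilinearSetNat B) : IsSemilinearSetNat (A ∪ B) := by
  obtain ⟨S, hS, hSlin, rfl⟩ := isSemilinearSetNat_iff.1 hA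
  obtain ⟨T, hT, hTlin, rfl⟩ := isSemilinearSetNat_iff.1 hB
  exact isSemilinearSetNat_iff.2 ⟨S ∪ T, hS.union hT,
    fun q hq => hq.elim (hSlin q) (hTlin q), (Set.sUnion_union S T).symm⟩

lemma IsSemilinearSetNat.add {A B : Set (α → ℕ)} (hA : IsSemilinearSetNat A)
    (hB : IsSemilinearSetNat B) : IsSemilinearSetNat (A + B) := by
  obtain ⟨S, hS, hSlin, rfl⟩ := isSemilinearSetNat_iff.1 hA
  obtain ⟨T, hT, hTlin, rfl⟩ := isSemilinearSetNat_iff.1 hB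
  refine isSemilinearSetNat_iff.2 ⟨Set.image2 (· + ·) S T, hS.image2 _ hT, ?_, ?_⟩
  · rintro _ ⟨q, hq, r, hr, rfl⟩
    exact (hSlin q hq).add (hTlin r hr)
  · ext x
    constructor
    · rintro ⟨a, ⟨q, hq, ha⟩, b, ⟨r, hr, hb⟩, rfl⟩
      exact ⟨_, ⟨q, hq, r, hr, rfl⟩, a, ha, b, hb, rfl⟩
    · rintro ⟨_, ⟨q, hq, r, hr, rfl⟩, a, ha, b, hb, rfl⟩
      exact ⟨a, ⟨q, hq, ha⟩, b, ⟨r, hr, hb⟩, rfl⟩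

lemma IsLinearSetNat.isSemilinearSetNat_closure {Q : Set (α → ℕ)} (hQ : IsLinearSetNat Q) :
    IsSemilinearSetNat (AddSubmonoid.closure Q : Set (α → ℕ)) := by
  obtain ⟨v₀, P, hP, rfl⟩ := isLinearSetNat_iff.1 hQ
  rw [AddSubmonoid.closure_singleton_add_closure]
  exact isLinearSetNat_zero.isSemilinearSetNat.union
    (isLinearSetNat_iff.2 ⟨v₀, _, hP.insert v₀, rfl⟩).isSemilinearSetNat

lemma IsSemilinearSetNat.closure {Q : Set (α → ℕ)} (hQ : IsSemilinearSetNat Q) :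
    IsSemilinearSetNat (AddSubmonoid.closure Q : Set (α → ℕ)) := by
  obtain ⟨S, hS, hSlin, rfl⟩ := isSemilinearSetNat_iff.1 hQ
  clear hQ
  induction S, hS using Set.Finite.induction_on with
  | empty => simpa using isLinearSetNat_zero.isSemilinearSetNat
  | @insert q S _ _ ih =>
    rw [Set.sUnion_insert, AddSubmonoid.closure_union, AddSubmonoid.coe_sup]
    exact (hSlin q (Set.mem_insert q S)).isSemilinearSetNat_closure.add
      (ih fun r hr => hSlin r (Set.mem_insert_of_mem q hr))

end SemilinearSets

section Parikh

variable {σ : Type*}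

lemma parikhWord_nil : parikhWord ([] : List σ) = 0 := by
  funext a
  simp [parikhWord]

lemma parikhWord_append (u w : List σ) : parikhWord (u ++ w) = parikhWord u + parikhWord w := by
  funext a
  simp [parikhWord, List.count_append]

lemma parikhWord_flatten (S : List (List σ)) : parikhWord S.flatten = (S.map parikhWord).sum := by
  induction S with
  | nil => exact parikhWord_nil
  | cons w S ih => rw [List.flatten_cons, parikhWord_append, ih, List.map_cons, List.sum_cons]

open scoped Computability in
theorem image_parikhWord_kstar (L : Language σ) :
    parikhWord '' (L∗ : Language σ) = (AddSubmonoid.closure (parikhWord '' L) : Set (σ → ℕ)) := by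
  apply Set.Subset.antisymm
  · rintro _ ⟨_, ⟨S, rfl, hS⟩, rfl⟩
    rw [parikhWord_flatten]
    refine AddSubmonoid.list_sum_mem _ fun x hx => ?_
    obtain ⟨w, hw, rfl⟩ := List.mem_map.1 hx
    exact AddSubmonoid.subset_closure ⟨w, hS w hw, rfl⟩
  · intro x hx
    induction hx using AddSubmonoid.closure_induction with
    | mem x hx => exact Set.image_mono (le_kstar (a := L)) hx
    | zero => exact ⟨[], Language.nil_mem_kstar L, parikhWord_nil⟩
    | add x y _ _ hx hy =>
      obtain ⟨u, hu, rfl⟩ := hx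
      obtain ⟨w, hw, rfl⟩ := hy
      exact ⟨u ++ w, kstar_mul_kstar L ▸ Language.append_mem_mul hu hw, parikhWord_append u w⟩

end Parikh

open scoped Computability in
theorem semilinear_kstar_general {σ : Type*} (L : Language σ)
    (hL : IsSemilinearLanguage L) :
    IsSemilinearLanguage (L∗ : Language σ) := by
  unfold IsSemilinearLanguage at *
  rw [image_parikhWord_kstar]
  exact hL.closure

open scoped Computability in
/-- if L is a semilinear language then its Kleene star L* is semilinear. -/
theorem semilinear_kstar {σ : Type*} [Fintype σ] (L : Language σ)
    (hL : IsSemilinearLanguage L) :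
    IsSemilinearLanguage (L∗ : Language σ) :=
  semilinear_kstar_general L hL
end

section
/- The set {(i, j) ∈ ℕ² : i ≥ 1, j ≥ 1, and i divides j} is not a semilinear subset of ℕ². (Equivalently, the language {a^i b^j : i, j ≥ 1, j divisible by i} is not a semilinear language.) -/
/-!
The points `(m, m²)`, `m ≥ 1`, all lie in the divisibility set, but a linear set `Q` contained
in it holds only finitely many of them. Indeed, once `m` exceeds the first coordinate of the
constant of `Q`, some period `(a, b)` of `Q` has `a ≥ 1`, and then `(m + k a, m² + k b) ∈ Q`
for every `k`. But `m + k a ∣ m² + k b` forces `m + k a ∣ m (a m - b)`, which is impossible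
for large `k` as soon as `b < m`.
-/

def linearSetNat {α : Type*} {l : ℕ} (v₀ : α → ℕ) (v : Fin l → α → ℕ) : Set (α → ℕ) :=
  { x | ∃ c : Fin l → ℕ, x = v₀ + ∑ j, c j • v j }

section LinearSet

variable {α : Type*} {l : ℕ} {v₀ x : α → ℕ} {v : Fin l → α → ℕ}

theorem add_smul_mem_linearSetNat (hx : x ∈ linearSetNat v₀ v) (j : Fin l) (k : ℕ) :
    x + k • v j ∈ linearSetNat v₀ v := by
  obtain ⟨c, rfl⟩ := hx
  refine ⟨c + Pi.single j k, ?_⟩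
  simp [add_smul, Finset.sum_add_distrib, Pi.single_apply, add_assoc]

theorem apply_eq_of_mem_linearSetNat (hx : x ∈ linearSetNat v₀ v) {a : α}
    (hv : ∀ j, v j a = 0) : x a = v₀ a := by
  obtain ⟨c, rfl⟩ := hx
  simp [Finset.sum_apply, hv]

end LinearSet

theorem Nat.exists_not_add_mul_dvd_sq_add_mul {m a b : ℕ} (ha : 0 < a) (hb : b < m) :
    ∃ k, ¬ m + k * a ∣ m ^ 2 + k * b := by
  refine ⟨m ^ 2, fun hdvd => ?_⟩
  have hm_le : m ≤ a * m := Nat.le_mul_of_pos_left m ha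
  have hkey : a * (m ^ 2 + m ^ 2 * b) = m * (a * m - b) + b * (m + m ^ 2 * a) := by
    zify [hb.le.trans hm_le]
    ring
  have hdvd' : m + m ^ 2 * a ∣ m * (a * m - b) :=
    (Nat.dvd_add_left (dvd_mul_left _ _)).mp (hkey ▸ hdvd.mul_left a)
  have hpos : 0 < m * (a * m - b) := Nat.mul_pos (by omega) (by omega)
  have hlt : m * (a * m - b) < m + m ^ 2 * a :=
    calc m * (a * m - b) ≤ m * (a * m) := Nat.mul_le_mul_left m (Nat.sub_le _ _)
      _ = m ^ 2 * a := by ring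
      _ < m + m ^ 2 * a := by omega
  exact absurd (Nat.le_of_dvd hpos hdvd') (not_le.mpr hlt)

theorem finite_setOf_sq_mem_of_isLinearSetNat {Q : Set (Fin 2 → ℕ)} (hQ : IsLinearSetNat Q)
    (hdvd : ∀ x ∈ Q, x 0 ∣ x 1) : {m : ℕ | ![m, m ^ 2] ∈ Q}.Finite := by
  obtain ⟨v₀, l, v, rfl⟩ := hQ
  refine (Set.finite_Iic (v₀ 0 + ∑ j, v j 1)).subset fun m (hm : _ ∈ linearSetNat v₀ v) => ?_
  by_contra hlarge
  simp only [Set.mem_Iic, not_le] at hlarge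
  obtain ⟨j, hj⟩ : ∃ j, 0 < v j 0 := by
    by_contra! hv
    have := apply_eq_of_mem_linearSetNat hm (a := 0) fun j => Nat.le_zero.mp (hv j)
    rw [Matrix.cons_val_zero] at this
    omega
  have hb : v j 1 < m :=
    lt_of_le_of_lt
      (Finset.single_le_sum (f := fun j => v j 1) (fun _ _ => Nat.zero_le _) (Finset.mem_univ j))
      (by omega)
  obtain ⟨k, hk⟩ := Nat.exists_not_add_mul_dvd_sq_add_mul hj hb
  apply hk
  simpa [smul_eq_mul] using hdvd _ (add_smul_mem_linearSetNat hm j k)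

/-- the set {(i, j) ∈ ℕ² : i ≥ 1, j ≥ 1, i divides j} is not a
semilinear subset of ℕ². -/
theorem divisibility_not_semilinear :
    ¬ IsSemilinearSetNat { v : Fin 2 → ℕ | 1 ≤ v 0 ∧ 1 ≤ v 1 ∧ v 0 ∣ v 1 } := by
  rintro ⟨n, Qs, hlin, hEq⟩
  have hdvd : ∀ i, ∀ x ∈ Qs i, x 0 ∣ x 1 := fun i x hx => by
    have hmem : x ∈ ⋃ i, Qs i := Set.mem_iUnion_of_mem i hx
    exact (hEq ▸ hmem).2.2
  have hcover : Set.Ici 1 ⊆ ⋃ i, {m : ℕ | ![m, m ^ 2] ∈ Qs i} := fun m (hm : 1 ≤ m) => by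
    have hmem : ![m, m ^ 2] ∈ { v : Fin 2 → ℕ | 1 ≤ v 0 ∧ 1 ≤ v 1 ∧ v 0 ∣ v 1 } :=
      ⟨hm, Nat.one_le_pow _ _ hm, dvd_pow_self m two_ne_zero⟩
    simpa [hEq] using hmem
  exact Set.Ici_infinite 1 <|
    (Set.finite_iUnion fun i => finite_setOf_sq_mem_of_isLinearSetNat (hlin i) (hdvd i)).subset
      hcover
end
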